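/- arXiv:1001.2229 — 3 statements merged into one kernel-verified Lean document; each statement's English description precedes it below -/
import Mathlib

section
/- Let Q = {(x,y) ∈ ℝ² : x > 0 ∧ y > 0} ∪ {(0,0)} with the subspace topology. For t ≥ 0 define α_t : ℝ_{>0} → ℝ_{>0} by α_t(x) = min(1, t + ((x−t)/t)²) for t > 0 and α_0(x) = 1, and define f_t : Q → Q by f_t(0,0) = (0,0) and f_t(x,y) = α_t(y/x)·(x,y) otherwise. Then (t,(x,y)) ↦ f_t(x,y) is continuous on ℝ_{≥0} × Q, each f_t is a homeomorphism of Q, but the family of inverses is not continuous: along the path γ(t) = (t, t²) one has lim_{t→0} f_t⁻¹(γ(t)) = (1,0) ≠ (0,0) = f_0⁻¹(γ(0)). -/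
open Set Filter

/-- The quarter-plane-with-origin `Q = {(x,y) : x > 0 ∧ y > 0} ∪ {(0,0)}`. -/
def Qset : Set (ℝ × ℝ) := {p | (0 < p.1 ∧ 0 < p.2) ∨ p = (0, 0)}

/-- `α_t(x) = min(1, t + ((x−t)/t)²)` for `t > 0`, and `α_t(x) = 1` otherwise. -/
noncomputable def alphaMap (t x : ℝ) : ℝ :=
  if 0 < t then min 1 (t + ((x - t) / t) ^ 2) else 1

theorem alphaMap_pos (t x : ℝ) : 0 < alphaMap t x := by
  unfold alphaMap
  split
  · exact lt_min one_pos (by linarith [sq_nonneg ((x - t) / t), ‹0 < t›])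
  · exact one_pos

/-- `f_t : Q → Q`, fixing the origin and scaling `(x,y)` by `α_t(y/x)` otherwise. -/
noncomputable def fQ (t : ℝ) (q : Qset) : Qset :=
  if h : (q : ℝ × ℝ) = (0, 0) then ⟨(0, 0), Or.inr rfl⟩
  else
    ⟨(alphaMap t (q.val.2 / q.val.1) * q.val.1, alphaMap t (q.val.2 / q.val.1) * q.val.2),
      Or.inl ⟨mul_pos (alphaMap_pos _ _) (q.property.resolve_right h).1,
        mul_pos (alphaMap_pos _ _) (q.property.resolve_right h).2⟩⟩

/-!
Each `f_t` rescales a point of `Q` by a factor `α_t(y/x) ∈ (0, 1]` that depends only on its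
slope, so its inverse rescales by `1/α_t(y/x)`, and both are continuous because the factors are
bounded (which handles the origin). Joint continuity in `t` holds because `α_t(s) = 1` as soon
as `s ≥ 2t`, so `α` is continuous at `(0, s)` for every slope `s > 0`. The inverses, however,
are not uniformly bounded: `α_t(t) = t`, so `f_t⁻¹` maps `(t, t²)` to `(1, t)`.
-/

theorem continuous_smul_of_norm_le {Z 𝕜 E : Type*} [TopologicalSpace Z] [NormedField 𝕜]
    [NormedAddCommGroup E] [NormedSpace 𝕜 E] {c : Z → 𝕜} {p : Z → E} (hp : Continuous p)
    (hc : ∀ z, p z ≠ 0 → ContinuousAt c z) {C : ℝ} (hC : ∀ z, ‖c z‖ ≤ C) :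
    Continuous fun z => c z • p z := by
  refine continuous_iff_continuousAt.2 fun z => ?_
  by_cases hz : p z = 0
  · have hp0 : Tendsto p (nhds z) (nhds 0) := hz ▸ hp.continuousAt
    simpa [ContinuousAt, hz] using (isBoundedUnder_of ⟨C, hC⟩).smul_tendsto_zero hp0
  · exact (hc z hz).smul hp.continuousAt

/-- Junk value `0` when `x = 0`, which on `Q` happens only at the origin. -/
noncomputable def Prod.slope (p : ℝ × ℝ) : ℝ := p.2 / p.1

namespace Prod

theorem slope_smul {c : ℝ} (hc : c ≠ 0) (p : ℝ × ℝ) : (c • p).slope = p.slope :=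
  mul_div_mul_left _ _ hc

theorem continuousAt_slope {p : ℝ × ℝ} (hp : p.1 ≠ 0) : ContinuousAt slope p :=
  continuousAt_snd.div continuousAt_fst hp

end Prod

namespace Qset

theorem pos_of_ne_zero {p : ℝ × ℝ} (hp : p ∈ Qset) (h0 : p ≠ 0) : 0 < p.1 ∧ 0 < p.2 :=
  hp.resolve_right h0

theorem smul_mem {c : ℝ} (hc : 0 ≤ c) {p : ℝ × ℝ} (hp : p ∈ Qset) : c • p ∈ Qset := by
  rcases hc.lt_or_eq with hc | rfl
  · rcases hp with ⟨hx, hy⟩ | rfl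
    · exact Or.inl ⟨mul_pos hc hx, mul_pos hc hy⟩
    · exact Or.inr (smul_zero c)
  · exact Or.inr (zero_smul ℝ p)

end Qset

noncomputable def radialScale (c : ℝ → ℝ) (hc : ∀ s, 0 < c s) (q : Qset) : Qset :=
  ⟨c (q : ℝ × ℝ).slope • (q : ℝ × ℝ), Qset.smul_mem (hc _).le q.2⟩

theorem radialScale_inv_radialScale (c : ℝ → ℝ) (hc : ∀ s, 0 < c s) (q : Qset) :
    radialScale c⁻¹ (fun s => inv_pos.2 (hc s)) (radialScale c hc q) = q := by
  ext1
  simp only [radialScale, Prod.slope_smul (hc _).ne', Pi.inv_apply, smul_smul,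
    inv_mul_cancel₀ (hc _).ne', one_smul]

theorem continuous_radialScale {c : ℝ → ℝ} (hc : ∀ s, 0 < c s) (hcont : Continuous c)
    {C : ℝ} (hC : ∀ s, c s ≤ C) : Continuous (radialScale c hc) := by
  refine Continuous.subtype_mk (continuous_smul_of_norm_le (C := C) continuous_subtype_val
    (fun q hq => ?_) fun q => ?_) _
  · exact hcont.continuousAt.comp
      ((Prod.continuousAt_slope (Qset.pos_of_ne_zero q.2 hq).1.ne').comp continuousAt_subtype_val)
  · exact (Real.norm_of_nonneg (hc _).le).trans_le (hC _)

noncomputable def radialScaleHomeomorph (c : ℝ → ℝ) (hc : ∀ s, 0 < c s) (hcont : Continuous c)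
    {C C' : ℝ} (hC : ∀ s, c s ≤ C) (hC' : ∀ s, (c s)⁻¹ ≤ C') : Qset ≃ₜ Qset where
  toFun := radialScale c hc
  invFun := radialScale c⁻¹ fun s => inv_pos.2 (hc s)
  left_inv := radialScale_inv_radialScale c hc
  right_inv q := by
    simpa only [inv_inv] using radialScale_inv_radialScale c⁻¹ (fun s => inv_pos.2 (hc s)) q
  continuous_toFun := continuous_radialScale hc hcont hC
  continuous_invFun := continuous_radialScale _ (hcont.inv₀ fun s => (hc s).ne') hC'

theorem alphaMap_le_one (t x : ℝ) : alphaMap t x ≤ 1 := by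
  unfold alphaMap
  split
  · exact min_le_left _ _
  · exact le_rfl

theorem alphaMap_inv_le (t x : ℝ) : (alphaMap t x)⁻¹ ≤ max 1 t⁻¹ := by
  unfold alphaMap
  split
  · have hmin : min 1 t ≤ min 1 (t + ((x - t) / t) ^ 2) :=
      min_le_min le_rfl (le_add_of_nonneg_right (sq_nonneg _))
    calc (min 1 (t + ((x - t) / t) ^ 2))⁻¹ ≤ (min 1 t)⁻¹ :=
          inv_anti₀ (lt_min one_pos ‹0 < t›) hmin
      _ ≤ max 1 t⁻¹ := by rcases min_choice 1 t with h | h <;> simp [h]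
  · simp

theorem continuous_alphaMap (t : ℝ) : Continuous (alphaMap t) := by
  unfold alphaMap
  split
  · fun_prop
  · exact continuous_const

theorem alphaMap_eq_one_of_two_mul_le {t s : ℝ} (h : 2 * t ≤ s) : alphaMap t s = 1 := by
  unfold alphaMap
  split
  · have hge : 1 ≤ (s - t) / t := by rw [le_div_iff₀ ‹0 < t›]; linarith
    exact min_eq_left (by nlinarith)
  · rfl

theorem alphaMap_self {t : ℝ} (ht : 0 < t) (ht1 : t ≤ 1) : alphaMap t t = t := by
  simp [alphaMap, ht, ht1]

theorem continuousAt_alphaMap {t s : ℝ} (ht : 0 ≤ t) (hs : 0 < s) :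
    ContinuousAt (fun p : ℝ × ℝ => alphaMap p.1 p.2) (t, s) := by
  rcases ht.lt_or_eq with ht | rfl
  · have hformula : (fun p : ℝ × ℝ => min 1 (p.1 + ((p.2 - p.1) / p.1) ^ 2))
        =ᶠ[nhds (t, s)] fun p => alphaMap p.1 p.2 := by
      filter_upwards [continuous_fst.isOpen_preimage _ isOpen_Ioi |>.mem_nhds ht] with p hp
      simp [alphaMap, show 0 < p.1 from hp]
    refine ContinuousAt.congr ?_ hformula
    exact continuousAt_const.min (continuousAt_fst.add
      (((continuousAt_snd.sub continuousAt_fst).div continuousAt_fst ht.ne').pow 2))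
  · have hone : (fun _ => (1 : ℝ)) =ᶠ[nhds (0, s)] fun p : ℝ × ℝ => alphaMap p.1 p.2 := by
      have hlt : ∀ᶠ p : ℝ × ℝ in nhds (0, s), 2 * p.1 < p.2 :=
        (continuous_const.mul continuous_fst).continuousAt.eventually_lt continuous_snd.continuousAt
          (by simpa using hs)
      filter_upwards [hlt] with p hp
      exact (alphaMap_eq_one_of_two_mul_le hp.le).symm
    exact continuousAt_const.congr hone

theorem coe_fQ (t : ℝ) (q : Qset) :
    (fQ t q : ℝ × ℝ) = alphaMap t (q : ℝ × ℝ).slope • (q : ℝ × ℝ) := by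
  unfold fQ
  split
  · next h => simp [h]
  · rfl

theorem fQ_eq_radialScale (t : ℝ) : fQ t = radialScale (alphaMap t) (alphaMap_pos t) :=
  funext fun q => Subtype.ext (coe_fQ t q)

noncomputable def fQHomeomorph (t : ℝ) : Qset ≃ₜ Qset :=
  radialScaleHomeomorph (alphaMap t) (alphaMap_pos t) (continuous_alphaMap t)
    (alphaMap_le_one t) (alphaMap_inv_le t)

theorem coe_fQHomeomorph (t : ℝ) : ⇑(fQHomeomorph t) = fQ t :=
  (fQ_eq_radialScale t).symm

theorem coe_fQHomeomorph_symm_apply (t : ℝ) (q : Qset) :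
    ((fQHomeomorph t).symm q : ℝ × ℝ) = (alphaMap t (q : ℝ × ℝ).slope)⁻¹ • (q : ℝ × ℝ) :=
  rfl

/-- The point `(t, t²)` has slope `t`, where `α_t(t) = t`, so `f_t⁻¹` blows it up by `1/t`. -/
theorem fQHomeomorph_symm_parabola {t : ℝ} (ht : 0 < t) (ht1 : t ≤ 1)
    (hq : ((t, t ^ 2) : ℝ × ℝ) ∈ Qset) :
    ((fQHomeomorph t).symm ⟨(t, t ^ 2), hq⟩ : ℝ × ℝ) = (1, t) := by
  have hslope : ((t, t ^ 2) : ℝ × ℝ).slope = t := by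
    simp only [Prod.slope]
    field_simp
  rw [coe_fQHomeomorph_symm_apply, hslope, alphaMap_self ht ht1, Prod.smul_mk, smul_eq_mul,
    smul_eq_mul, inv_mul_cancel₀ ht.ne', sq, ← mul_assoc, inv_mul_cancel₀ ht.ne', one_mul]

theorem continuous_fQ_uncurry :
    Continuous fun z : {t : ℝ // 0 ≤ t} × Qset => fQ z.1.val z.2 := by
  simp only [fQ_eq_radialScale]
  refine Continuous.subtype_mk (continuous_smul_of_norm_le (C := 1)
    (continuous_subtype_val.comp continuous_snd) (fun z hz => ?_) fun z => ?_) _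
  · have hq := Qset.pos_of_ne_zero z.2.2 hz
    have hslope : ContinuousAt (fun z : {t : ℝ // 0 ≤ t} × Qset => (z.2 : ℝ × ℝ).slope) z :=
      (Prod.continuousAt_slope hq.1.ne').comp (f := fun z : {t : ℝ // 0 ≤ t} × Qset => (z.2 : ℝ × ℝ))
        (continuous_subtype_val.comp continuous_snd).continuousAt
    exact (continuousAt_alphaMap (s := (z.2 : ℝ × ℝ).slope) z.1.2 (div_pos hq.2 hq.1)).comp
      (f := fun z : {t : ℝ // 0 ≤ t} × Qset => (z.1.val, (z.2 : ℝ × ℝ).slope))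
      ((continuousAt_subtype_val.comp continuousAt_fst).prodMk hslope)
  · exact (Real.norm_of_nonneg (alphaMap_pos _ _).le).trans_le (alphaMap_le_one _ _)

/-- The family `{f_t}_{t ≥ 0}` of maps of `Q` is continuous in `(t, q)` jointly, and each
`f_t` (for `t ≥ 0`) is a homeomorphism of `Q`; nevertheless the family of inverses is
not continuous: along the path `γ(t) = (t, t²)` one has
`lim_{t→0⁺} f_t⁻¹(γ(t)) = (1,0) ≠ (0,0) = f_0⁻¹(γ(0))`. -/
theorem stmt_1 :
    Continuous (fun z : {t : ℝ // 0 ≤ t} × Qset => fQ z.1.val z.2) ∧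
    (∀ t : ℝ, 0 ≤ t → ∃ e : Qset ≃ₜ Qset, ∀ q, e q = fQ t q) ∧
    ∀ e : {t : ℝ // 0 ≤ t} → Qset ≃ₜ Qset, (∀ t q, e t q = fQ t.val q) →
      Tendsto
        (fun t : ℝ =>
          if ht : 0 < t then
            (((e ⟨t, ht.le⟩).symm ⟨(t, t ^ 2), Or.inl ⟨ht, pow_pos ht 2⟩⟩ : Qset) : ℝ × ℝ)
          else (0, 0))
        (nhdsWithin 0 (Ioi 0)) (nhds (1, 0)) ∧
      (((e ⟨0, le_refl 0⟩).symm ⟨(0, 0), Or.inr rfl⟩ : Qset) : ℝ × ℝ) = (0, 0) := by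
  refine ⟨continuous_fQ_uncurry, fun t _ => ⟨fQHomeomorph t, congrFun (coe_fQHomeomorph t)⟩,
    fun e he => ?_⟩
  have he_eq : ∀ t, e t = fQHomeomorph t.val := fun t =>
    Homeomorph.ext fun q => by rw [he, coe_fQHomeomorph]
  simp only [he_eq]
  refine ⟨?_, by simp [coe_fQHomeomorph_symm_apply]⟩
  refine (tendsto_const_nhds.prodMk_nhds (tendsto_id.mono_left nhdsWithin_le_nhds)).congr' ?_
  filter_upwards [Ioo_mem_nhdsGT (zero_lt_one' ℝ)] with t ⟨ht, ht1⟩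
  rw [dif_pos ht]
  exact (fQHomeomorph_symm_parabola ht ht1.le _).symm
end

section
/- Let G be a path-connected topological group and let f : ∂(Iⁿ) → G be a continuous map on the boundary of the n-cube satisfying the periodicity conditions f(0, x₂, …, xₙ) = f(1, x₂, …, xₙ), f(x₁, 0, x₃, …, xₙ) = f(x₁, 1, x₃, …, xₙ), …, f(x₁, …, x_{n−1}, 0) = f(x₁, …, x_{n−1}, 1). Then f is homotopic to a constant map. -/
/-!
For `g : ∂Iⁿ → G` put `g' = g · (g ∘ pᵢ)⁻¹`, where `pᵢ` projects onto the face `xᵢ = 0`.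
That face is contractible, so `g ∘ pᵢ` is nullhomotopic, and `g = g' · (g ∘ pᵢ)` is
nullhomotopic as soon as `g'` is. Because `g` identifies opposite faces, `g'` is trivial on
both faces `xᵢ = 0` and `xᵢ = 1`; since `pᵢ` maps every pair of opposite faces into itself,
`g'` stays trivial wherever `g` was, and it still identifies opposite faces. After doing this
for every direction the map is the constant `1`.
-/

/-- The boundary of the `n`-cube `Iⁿ = [0,1]ⁿ`. -/
def cubeBoundary (n : ℕ) : Set (Fin n → unitInterval) :=
  {x | ∃ i, x i = 0 ∨ x i = 1}

/-- A map on the boundary of the cube identifies opposite faces if its values at the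
two points obtained by setting some coordinate to `0`, resp. `1`, always agree. -/
def IdentifiesOppositeFaces {n : ℕ} {X : Type*} [TopologicalSpace X]
    (f : C(cubeBoundary n, X)) : Prop :=
  ∀ (x : Fin n → unitInterval) (i : Fin n),
    f ⟨Function.update x i 0, ⟨i, Or.inl (by simp)⟩⟩ =
      f ⟨Function.update x i 1, ⟨i, Or.inr (by simp)⟩⟩

open ContinuousMap Function Set unitInterval

theorem ContinuousMap.Homotopic.mul {X M : Type*} [TopologicalSpace X] [TopologicalSpace M]
    [Mul M] [ContinuousMul M] {f₀ f₁ g₀ g₁ : C(X, M)} (hf : f₀.Homotopic f₁)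
    (hg : g₀.Homotopic g₁) : (f₀ * g₀).Homotopic (f₁ * g₁) := by
  obtain ⟨F⟩ := hf
  obtain ⟨G⟩ := hg
  exact ⟨{ toFun := fun p => F p * G p
           map_zero_left := by simp
           map_one_left := by simp }⟩

theorem ContinuousMap.Nullhomotopic.mul {X M : Type*} [TopologicalSpace X] [TopologicalSpace M]
    [Mul M] [ContinuousMul M] {f g : C(X, M)} (hf : f.Nullhomotopic) (hg : g.Nullhomotopic) :
    (f * g).Nullhomotopic := by
  obtain ⟨a, ha⟩ := hf
  obtain ⟨b, hb⟩ := hg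
  exact ⟨a * b, ha.mul hb⟩

namespace cubeBoundary

variable {n : ℕ}

theorem update_mem (x : Fin n → I) (i : Fin n) {t : I} (ht : t = 0 ∨ t = 1) :
    update x i t ∈ cubeBoundary n :=
  ⟨i, by simpa using ht⟩

/-- The projection `pᵢ` of the boundary onto the face `xᵢ = 0`. -/
def faceProj (i : Fin n) : C(cubeBoundary n, cubeBoundary n) where
  toFun x := ⟨update x.1 i 0, update_mem _ _ (.inl rfl)⟩
  continuous_toFun := by fun_prop

@[simp]
theorem coe_faceProj (i : Fin n) (x : cubeBoundary n) :
    (faceProj i x : Fin n → I) = update x.1 i 0 :=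
  rfl

/-- The face `xᵢ = 0` contracts to the origin by scaling the remaining coordinates. -/
theorem faceProj_nullhomotopic (i : Fin n) : (faceProj i).Nullhomotopic := by
  refine ⟨⟨0, i, .inl rfl⟩, .symm ⟨{
    toFun := fun p => ⟨update (fun j => p.1 * p.2.1 j) i 0, update_mem _ _ (.inl rfl)⟩
    continuous_toFun := by
      have hscale : Continuous fun p : I × cubeBoundary n => fun j => p.1 * p.2.1 j :=
        continuous_pi fun j => continuous_fst.mul
          ((continuous_apply j).comp (continuous_subtype_val.comp continuous_snd))
      exact (hscale.update i continuous_const).subtype_mk _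
    map_zero_left := fun x => by ext j : 2; by_cases h : j = i <;> simp [h]
    map_one_left := fun x => by ext j : 2; by_cases h : j = i <;> simp [h] }⟩⟩

def faces (s : Finset (Fin n)) : Set (cubeBoundary n) :=
  {x | ∃ j ∈ s, x.1 j = 0 ∨ x.1 j = 1}

theorem faces_univ : faces (Finset.univ : Finset (Fin n)) = univ :=
  eq_univ_of_forall fun x => let ⟨j, hj⟩ := x.2; ⟨j, Finset.mem_univ j, hj⟩

theorem mapsTo_faceProj_faces (i : Fin n) (s : Finset (Fin n)) :
    MapsTo (faceProj i) (faces s) (faces s) := by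
  rintro x ⟨j, hj, hx⟩
  refine ⟨j, hj, ?_⟩
  by_cases hji : j = i
  · simp [hji]
  · simpa [hji] using hx

end cubeBoundary

open cubeBoundary

namespace IdentifiesOppositeFaces

variable {n : ℕ}

theorem mul {M : Type*} [TopologicalSpace M] [Mul M] [ContinuousMul M]
    {g h : C(cubeBoundary n, M)} (hg : IdentifiesOppositeFaces g)
    (hh : IdentifiesOppositeFaces h) : IdentifiesOppositeFaces (g * h) :=
  fun x i => by simp only [ContinuousMap.mul_apply, hg x i, hh x i]

theorem inv {G : Type*} [TopologicalSpace G] [Inv G] [ContinuousInv G]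
    {g : C(cubeBoundary n, G)} (hg : IdentifiesOppositeFaces g) :
    IdentifiesOppositeFaces g⁻¹ :=
  fun x i => by simp only [ContinuousMap.inv_apply, hg x i]

section

variable {X : Type*} [TopologicalSpace X] {g : C(cubeBoundary n, X)}

theorem comp_faceProj (hg : IdentifiesOppositeFaces g) (i : Fin n) :
    IdentifiesOppositeFaces (g.comp (faceProj i)) := by
  intro x j
  by_cases hji : j = i
  · subst hji
    exact congrArg g (Subtype.ext (by simp))
  · have hproj : ∀ t (ht : t = 0 ∨ t = 1), faceProj i ⟨update x j t, update_mem _ _ ht⟩ =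
        ⟨update (update x i 0) j t, update_mem _ _ ht⟩ :=
      fun t ht => Subtype.ext (by simp [update_comm hji])
    exact (congrArg g (hproj 0 (.inl rfl))).trans
      ((hg _ j).trans (congrArg g (hproj 1 (.inr rfl))).symm)

theorem apply_faceProj (hg : IdentifiesOppositeFaces g) {i : Fin n} {x : cubeBoundary n}
    (hx : x.1 i = 0 ∨ x.1 i = 1) : g (faceProj i x) = g x := by
  rcases hx with hx | hx
  · exact congrArg g (Subtype.ext (by simp [← hx]))
  · exact (hg x.1 i).trans (congrArg g (Subtype.ext (by simp [← hx])))

end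

variable {G : Type*} [TopologicalSpace G] [Group G] [IsTopologicalGroup G]
  {g : C(cubeBoundary n, G)}

theorem eqOn_one_mul_inv_comp_faceProj (hg : IdentifiesOppositeFaces g) {s : Finset (Fin n)}
    (hs : EqOn g 1 (faces s)) (i : Fin n) :
    EqOn (g * (g.comp (faceProj i))⁻¹) 1 (faces (insert i s)) := by
  rintro x ⟨j, hj, hx⟩
  rcases Finset.mem_insert.mp hj with rfl | hj
  · simp [hg.apply_faceProj hx]
  · simp [hs ⟨j, hj, hx⟩, hs (mapsTo_faceProj_faces i s ⟨j, hj, hx⟩)]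

theorem exists_eqOn_one_faces (hg : IdentifiesOppositeFaces g) (s : Finset (Fin n)) :
    ∃ g' : C(cubeBoundary n, G), IdentifiesOppositeFaces g' ∧ EqOn g' 1 (faces s) ∧
      (g'.Nullhomotopic → g.Nullhomotopic) := by
  classical
  induction s using Finset.induction_on with
  | empty => exact ⟨g, hg, by simp [faces], id⟩
  | insert i s _ ih =>
    obtain ⟨g₁, hg₁, hs, hnull⟩ := ih
    refine ⟨g₁ * (g₁.comp (faceProj i))⁻¹, hg₁.mul (hg₁.comp_faceProj i).inv,
      hg₁.eqOn_one_mul_inv_comp_faceProj hs i, fun h => hnull ?_⟩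
    simpa only [inv_mul_cancel_right] using h.mul ((faceProj_nullhomotopic i).comp_right g₁)

end IdentifiesOppositeFaces

theorem stmt_8_general {G : Type*} [TopologicalSpace G] [Group G] [IsTopologicalGroup G]
    {n : ℕ} (f : C(cubeBoundary n, G))
    (hf : IdentifiesOppositeFaces f) :
    ∃ c : G, f.Homotopic (ContinuousMap.const _ c) := by
  obtain ⟨g, -, hg, hnull⟩ := hf.exists_eqOn_one_faces Finset.univ
  rw [faces_univ] at hg
  have hg_one : g = 1 := ContinuousMap.ext fun x => hg (mem_univ x)
  exact hnull (hg_one ▸ nullhomotopic_of_constant 1)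

/-- Every continuous map from `∂(Iⁿ)` to a path-connected topological group which
identifies opposite faces of the cube is homotopic to a constant map. -/
theorem stmt_8 {G : Type*} [TopologicalSpace G] [Group G] [IsTopologicalGroup G]
    [PathConnectedSpace G] {n : ℕ} (f : C(cubeBoundary n, G))
    (hf : IdentifiesOppositeFaces f) :
    ∃ c : G, f.Homotopic (ContinuousMap.const _ c) :=
  stmt_8_general f hf
end

section
/- Let G = (T × SU₂)/Γ where T = ℝ/ℤ, SU₂ is the group of unit quaternions, and Γ = {(0, 1), (1/2, −1)}. Then the center of G is the image of T × {1, −1} (isomorphic to T), the commutator subgroup of G is the image of {0, 1/2} × SU₂ (isomorphic to SU₂), and the intersection of the identity component of the center with the commutator subgroup is nontrivial, containing the class of (0, −1). -/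
/-- The circle group `T = ℝ/ℤ` (written multiplicatively). -/
abbrev TT := Multiplicative (AddCircle (1 : ℝ))

/-- The group `SU₂` of unit quaternions. -/
abbrev SU2 := Metric.sphere (0 : Quaternion ℝ) 1

/-- `-1` as a unit quaternion. -/
noncomputable def negOne : SU2 := ⟨-1, by simp⟩

/-- The generator `(1/2, -1)` of the central subgroup `Γ = {(0,1), (1/2,−1)}`
of `T × SU₂`. -/
noncomputable def gamma0 : TT × SU2 :=
  (Multiplicative.ofAdd ((1 / 2 : ℝ) : AddCircle (1 : ℝ)), negOne)

theorem gamma0_mem_center : gamma0 ∈ Subgroup.center (TT × SU2) := by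
  rw [Subgroup.mem_center_iff]
  intro g
  refine Prod.ext (mul_comm _ _) (Subtype.ext ?_)
  show (g.2 : Quaternion ℝ) * (negOne : Quaternion ℝ) = (negOne : Quaternion ℝ) * g.2
  have : (negOne : Quaternion ℝ) = -1 := rfl
  simp [this]

/-- `Γ = ⟨(1/2, −1)⟩` is a normal subgroup of `T × SU₂`. -/
instance : (Subgroup.zpowers gamma0).Normal := by
  constructor
  intro n hn g
  obtain ⟨k, rfl⟩ := Subgroup.mem_zpowers_iff.mp hn
  have hc : gamma0 ^ k ∈ Subgroup.center (TT × SU2) :=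
    Subgroup.zpow_mem _ gamma0_mem_center k
  have h2 := Subgroup.mem_center_iff.mp hc g
  rw [h2, mul_assoc, mul_inv_cancel, mul_one]
  exact hn

/-- The group `G = (T × SU₂)/Γ`. -/
abbrev Gquot := (TT × SU2) ⧸ Subgroup.zpowers gamma0

/-! Commutators of `T × SU₂` have trivial `T`-coordinate, so `Γ = {1, (1/2, −1)}` contains no
nontrivial commutator, and then the center of the quotient is the image of the center
`T × {±1}`; that the center of `SU₂` is `{±1}` comes from commuting with `i` and `j`.
Every unit quaternion `q` is a commutator: it has a unit square root `p`, and a pure unit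
quaternion `w` orthogonal to `Im p` satisfies `p w p = w`, whence `⁅p, w⁆ = p²`. Hence the
commutator subgroup of `G` is the image of `{0} × SU₂`, which modulo `Γ` is the image of
`{0, 1/2} × SU₂`. Finally the class of `(0, −1)` is that of `(1/2, 1)`, a point of the image of
the connected circle `T × {1}` inside the center. -/

open Quaternion Subgroup
open scoped commutatorElement

lemma commutatorElement_eq_mul_self_of_mul_mul_eq {G : Type*} [Group G] {p w : G}
    (h : p * w * p = w) : ⁅p, w⁆ = p * p := by
  have hw : w * p⁻¹ = p * w := mul_inv_eq_iff_eq_mul.mpr h.symm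
  rw [commutatorElement_def, mul_assoc p w, hw]
  group

lemma eq_one_or_eq_of_mem_zpowers {G : Type*} [Group G] {g x : G} (hg : g ^ 2 = 1)
    (hx : x ∈ zpowers g) : x = 1 ∨ x = g := by
  obtain ⟨k, rfl⟩ := mem_zpowers_iff.mp hx
  rw [zpow_eq_zpow_emod' k hg]
  rcases Int.emod_two_eq_zero_or_one k with h | h <;> simp [h]

theorem center_quotient_eq_map_center {G : Type*} [Group G] (N : Subgroup G) [N.Normal]
    (hN : ∀ g h : G, ⁅g, h⁆ ∈ N → ⁅g, h⁆ = 1) :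
    center (G ⧸ N) = (center G).map (QuotientGroup.mk' N) := by
  apply le_antisymm
  · intro x hx
    obtain ⟨g, rfl⟩ := QuotientGroup.mk'_surjective N x
    refine ⟨g, mem_center_iff.mpr fun h => ?_, rfl⟩
    have hgh : ⁅g, h⁆ ∈ N := by
      rw [← QuotientGroup.eq_one_iff, ← QuotientGroup.mk'_apply, map_commutatorElement,
        commutatorElement_eq_one_iff_mul_comm]
      exact (mem_center_iff.mp hx _).symm
    exact (commutatorElement_eq_one_iff_mul_comm.mp (hN g h hgh)).symm
  · rintro _ ⟨g, hg, rfl⟩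
    rw [mem_center_iff]
    intro y
    induction y using QuotientGroup.induction_on with
    | H h => exact congrArg (QuotientGroup.mk' N) (mem_center_iff.mp hg h)

theorem commutator_quotient_eq_map_commutator {G : Type*} [Group G] (N : Subgroup G) [N.Normal] :
    commutator (G ⧸ N) = (commutator G).map (QuotientGroup.mk' N) := by
  rw [map_commutator_eq, MonoidHom.range_eq_top.mpr (QuotientGroup.mk'_surjective N)]
  rfl

theorem commutator_prod_of_commGroup {A H : Type*} [CommGroup A] [Group H] :
    commutator (A × H) = (⊥ : Subgroup A).prod (commutator H) := by
  rw [_root_.commutator_def, ← top_prod_top, commutator_prod_prod, ← _root_.commutator_def,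
    commutator_eq_bot]
  rfl

lemma exists_orthogonal_unit_vector (b c d : ℝ) :
    ∃ e f g : ℝ, e ^ 2 + f ^ 2 + g ^ 2 = 1 ∧ b * e + c * f + d * g = 0 := by
  by_cases hbc : b ^ 2 + c ^ 2 = 0
  · have hb : b = 0 := by nlinarith
    exact ⟨1, 0, 0, by norm_num, by simp [hb]⟩
  · have hm : 0 < b ^ 2 + c ^ 2 := lt_of_le_of_ne (by positivity) (Ne.symm hbc)
    set m := √(b ^ 2 + c ^ 2)
    have hm2 : m ^ 2 = b ^ 2 + c ^ 2 := Real.sq_sqrt hm.le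
    have hm0 : m ≠ 0 := (Real.sqrt_pos.mpr hm).ne'
    refine ⟨-c / m, b / m, 0, ?_, ?_⟩
    · field_simp
      linear_combination -hm2
    · field_simp
      ring

namespace Quaternion

lemma mem_sphere_iff_normSq {q : ℍ[ℝ]} :
    q ∈ Metric.sphere (0 : ℍ[ℝ]) 1 ↔ normSq q = 1 := by
  rw [mem_sphere_zero_iff_norm, normSq_eq_norm_mul_self, ← sq,
    pow_eq_one_iff_of_nonneg (norm_nonneg q) two_ne_zero]

lemma eq_one_or_eq_neg_one_of_forall_commute {s : ℍ[ℝ]} (hs : normSq s = 1)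
    (h : ∀ q : ℍ[ℝ], normSq q = 1 → q * s = s * q) : s = 1 ∨ s = -1 := by
  let i : ℍ[ℝ] := ⟨0, 1, 0, 0⟩
  let j : ℍ[ℝ] := ⟨0, 0, 1, 0⟩
  have hi := h i (by rw [normSq_def']; norm_num [i])
  have hj := h j (by rw [normSq_def']; norm_num [j])
  have hb : s.imI = 0 := by
    have := congrArg QuaternionAlgebra.imK hj
    rw [imK_mul, imK_mul] at this
    simp only [j, zero_mul, mul_zero, one_mul, mul_one, zero_add, add_zero, zero_sub, sub_zero]
      at this
    linarith
  have hc : s.imJ = 0 := by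
    have := congrArg QuaternionAlgebra.imK hi
    rw [imK_mul, imK_mul] at this
    simp only [i, zero_mul, mul_zero, one_mul, mul_one, zero_add, add_zero, zero_sub, sub_zero]
      at this
    linarith
  have hd : s.imK = 0 := by
    have := congrArg QuaternionAlgebra.imJ hi
    rw [imJ_mul, imJ_mul] at this
    simp only [i, zero_mul, mul_zero, one_mul, mul_one, zero_add, add_zero, zero_sub, sub_self]
      at this
    linarith
  have hre : (s.re - 1) * (s.re + 1) = 0 := by
    rw [normSq_def', hb, hc, hd] at hs
    linear_combination hs
  rcases mul_eq_zero.mp hre with h | h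
  · left
    ext <;> simp only [re_one, imI_one, imJ_one, imK_one, hb, hc, hd]
    linarith
  · right
    ext <;> simp only [re_neg, imI_neg, imJ_neg, imK_neg, re_one, imI_one, imJ_one, imK_one, hb, hc,
      hd, neg_zero]
    linarith

lemma mul_mul_eq_self_of_orthogonal {p w : ℍ[ℝ]} (hp : normSq p = 1) (hw : w.re = 0)
    (ho : p.imI * w.imI + p.imJ * w.imJ + p.imK * w.imK = 0) : p * w * p = w := by
  rw [normSq_def'] at hp
  ext <;> simp only [re_mul, imI_mul, imJ_mul, imK_mul, hw]
  · linear_combination (-2 * p.re) * ho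
  · linear_combination w.imI * hp + (-2 * p.imI) * ho
  · linear_combination w.imJ * hp + (-2 * p.imJ) * ho
  · linear_combination w.imK * hp + (-2 * p.imK) * ho

lemma exists_mul_mul_eq_self {p : ℍ[ℝ]} (hp : normSq p = 1) :
    ∃ w : ℍ[ℝ], normSq w = 1 ∧ p * w * p = w := by
  obtain ⟨e, f, g, hn, ho⟩ := exists_orthogonal_unit_vector p.imI p.imJ p.imK
  let w : ℍ[ℝ] := ⟨0, e, f, g⟩
  refine ⟨w, ?_, mul_mul_eq_self_of_orthogonal hp rfl ho⟩
  rw [normSq_def']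
  linear_combination hn

lemma exists_mul_self_eq {q : ℍ[ℝ]} (hq : normSq q = 1) :
    ∃ p : ℍ[ℝ], normSq p = 1 ∧ p * p = q := by
  rw [normSq_def'] at hq
  have hre_ge : 0 ≤ 1 + q.re := by
    nlinarith [sq_nonneg q.imI, sq_nonneg q.imJ, sq_nonneg q.imK, sq_nonneg (1 + q.re)]
  rcases hre_ge.eq_or_lt with hre | hre
  · have hI : q.imI = 0 := by nlinarith [sq_nonneg q.imI, sq_nonneg q.imJ, sq_nonneg q.imK]
    have hJ : q.imJ = 0 := by nlinarith [sq_nonneg q.imI, sq_nonneg q.imJ, sq_nonneg q.imK]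
    have hK : q.imK = 0 := by nlinarith [sq_nonneg q.imI, sq_nonneg q.imJ, sq_nonneg q.imK]
    let i : ℍ[ℝ] := ⟨0, 1, 0, 0⟩
    refine ⟨i, by rw [normSq_def']; norm_num [i], ?_⟩
    ext <;> simp only [re_mul, imI_mul, imJ_mul, imK_mul] <;> norm_num [i, hI, hJ, hK]
    linarith
  · -- `p = (1 + q) / ‖1 + q‖`, since `(1 + q)² = ‖1 + q‖² q` when `‖q‖ = 1`
    set t := √(2 * (1 + q.re))
    have ht2 : t ^ 2 = 2 * (1 + q.re) := Real.sq_sqrt (by linarith)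
    have ht0 : t ≠ 0 := (Real.sqrt_pos.mpr (by linarith)).ne'
    refine ⟨t⁻¹ • (1 + q), ?_, ?_⟩
    · rw [normSq_def']
      simp only [smul_add, re_add, imI_add, imJ_add, imK_add, re_smul, imI_smul, imJ_smul, imK_smul,
        re_one, imI_one, imJ_one, imK_one, smul_eq_mul, mul_one, mul_zero, zero_add]
      field_simp
      linear_combination hq - ht2
    · ext <;> simp only [re_mul, imI_mul, imJ_mul, imK_mul, smul_add, re_add, imI_add, imJ_add,
          imK_add, re_smul, imI_smul, imJ_smul, imK_smul, re_one, imI_one, imJ_one, imK_one,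
          smul_eq_mul, mul_one, mul_zero, zero_add] <;> field_simp
      · linear_combination -hq - q.re * ht2
      · linear_combination -q.imI * ht2
      · linear_combination -q.imJ * ht2
      · linear_combination -q.imK * ht2

end Quaternion

lemma Continuous.apply_mem_connectedComponent {X Y : Type*} [TopologicalSpace X]
    [PreconnectedSpace X] [TopologicalSpace Y] {f : X → Y} (hf : Continuous f) (x y : X) :
    f x ∈ connectedComponent (f y) :=
  (isPreconnected_range hf).subset_connectedComponent ⟨y, rfl⟩ ⟨x, rfl⟩

namespace SU2

lemma negOne_eq : negOne = -1 := rfl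

lemma negOne_ne_one : negOne ≠ 1 := fun h => by
  have := congrArg (fun s : SU2 => (s : ℍ[ℝ]).re) h
  norm_num [negOne] at this

lemma negOne_sq : negOne ^ 2 = 1 := by
  rw [negOne_eq, sq, neg_one_mul, neg_neg]

lemma negOne_inv : negOne⁻¹ = negOne :=
  inv_eq_of_mul_eq_one_right (by rw [← sq, negOne_sq])

lemma negOne_mem_center : negOne ∈ center SU2 :=
  mem_center_iff.mpr fun g => by rw [negOne_eq, mul_neg_one, neg_one_mul]

theorem center_eq_zpowers_negOne : center SU2 = zpowers negOne := by
  refine le_antisymm (fun s hs => ?_) (zpowers_le.mpr negOne_mem_center)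
  have hcomm (q : ℍ[ℝ]) (hq : normSq q = 1) : q * s = s * q :=
    congrArg Subtype.val (mem_center_iff.mp hs ⟨q, mem_sphere_iff_normSq.mpr hq⟩)
  rcases eq_one_or_eq_neg_one_of_forall_commute (mem_sphere_iff_normSq.mp s.2) hcomm with h | h
  · rw [show s = 1 from Subtype.ext h]
    exact one_mem _
  · rw [show s = negOne from Subtype.ext h]
    exact mem_zpowers _

theorem mem_commutatorSet (s : SU2) : s ∈ commutatorSet SU2 := by
  obtain ⟨p, hp, hps⟩ := exists_mul_self_eq (mem_sphere_iff_normSq.mp s.2)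
  obtain ⟨w, hw, hpw⟩ := exists_mul_mul_eq_self hp
  let P : SU2 := ⟨p, mem_sphere_iff_normSq.mpr hp⟩
  let W : SU2 := ⟨w, mem_sphere_iff_normSq.mpr hw⟩
  refine ⟨P, W, ?_⟩
  rw [commutatorElement_eq_mul_self_of_mul_mul_eq (Subtype.ext hpw : P * W * P = W)]
  exact Subtype.ext hps

theorem commutator_eq_top : commutator SU2 = ⊤ := by
  rw [commutator_eq_closure, eq_top_iff]
  exact fun s _ => subset_closure (mem_commutatorSet s)

end SU2

instance : PreconnectedSpace TT := inferInstanceAs (PreconnectedSpace (AddCircle (1 : ℝ)))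

lemma orderOf_ofAdd_half :
    orderOf (Multiplicative.ofAdd ((1 / 2 : ℝ) : AddCircle (1 : ℝ))) = 2 := by
  rw [orderOf_ofAdd_eq_addOrderOf]
  exact_mod_cast AddCircle.addOrderOf_period_div (p := (1 : ℝ)) (n := 2) two_pos

lemma gamma0_sq : gamma0 ^ 2 = 1 :=
  Prod.ext (orderOf_ofAdd_half ▸ pow_orderOf_eq_one _) SU2.negOne_sq

lemma ofAdd_half_ne_one : Multiplicative.ofAdd ((1 / 2 : ℝ) : AddCircle (1 : ℝ)) ≠ 1 := by
  intro h
  have := orderOf_ofAdd_half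
  rw [h, orderOf_one] at this
  norm_num at this

lemma eq_one_of_mem_zpowers_gamma0 {x : TT × SU2} (hx : x ∈ zpowers gamma0) (h1 : x.1 = 1) :
    x = 1 := by
  refine (eq_one_or_eq_of_mem_zpowers gamma0_sq hx).resolve_right fun h => ?_
  subst h
  exact ofAdd_half_ne_one h1

theorem center_Gquot_eq :
    center Gquot =
      map (QuotientGroup.mk' (zpowers gamma0)) ((⊤ : Subgroup TT).prod (zpowers negOne)) := by
  have hΓ (g h : TT × SU2) (hgh : ⁅g, h⁆ ∈ zpowers gamma0) : ⁅g, h⁆ = 1 :=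
    eq_one_of_mem_zpowers_gamma0 hgh
      (commutatorElement_eq_one_iff_mul_comm.mpr (mul_comm g.1 h.1))
  rw [center_quotient_eq_map_center _ hΓ, Subgroup.center_prod, CommGroup.center_eq_top,
    SU2.center_eq_zpowers_negOne]

theorem commutator_Gquot_eq :
    commutator Gquot = map (QuotientGroup.mk' (zpowers gamma0)) ((⊥ : Subgroup TT).prod ⊤) := by
  rw [commutator_quotient_eq_map_commutator, commutator_prod_of_commGroup, SU2.commutator_eq_top]

lemma map_mk'_bot_prod_top :
    map (QuotientGroup.mk' (zpowers gamma0)) ((⊥ : Subgroup TT).prod ⊤) =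
      map (QuotientGroup.mk' (zpowers gamma0))
        ((zpowers (Multiplicative.ofAdd ((1 / 2 : ℝ) : AddCircle (1 : ℝ)))).prod ⊤) := by
  refine le_antisymm (map_mono (prod_mono bot_le le_rfl)) ?_
  rw [map_le_iff_le_comap, comap_map_eq, QuotientGroup.ker_mk']
  rintro ⟨t, s⟩ ⟨ht, -⟩
  rcases eq_one_or_eq_of_mem_zpowers (orderOf_ofAdd_half ▸ pow_orderOf_eq_one _) ht with rfl | rfl
  · exact mem_sup_left ⟨one_mem _, mem_top _⟩
  · have : (gamma0.1, s) = ((1 : TT), negOne * s) * gamma0 := by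
      refine Prod.ext (one_mul _).symm ?_
      change s = negOne * s * negOne
      rw [← mem_center_iff.mp SU2.negOne_mem_center s, mul_assoc, ← sq, SU2.negOne_sq, mul_one]
    exact this ▸ mul_mem_sup ⟨one_mem _, mem_top _⟩ (mem_zpowers _)

lemma mk'_one_negOne_ne_one : QuotientGroup.mk' (zpowers gamma0) (1, negOne) ≠ 1 := by
  rw [QuotientGroup.mk'_apply, Ne, QuotientGroup.eq_one_iff]
  exact fun h => SU2.negOne_ne_one (congrArg Prod.snd (eq_one_of_mem_zpowers_gamma0 h rfl))

lemma mk'_one_negOne_eq : QuotientGroup.mk' (zpowers gamma0) (1, negOne) =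
    QuotientGroup.mk' (zpowers gamma0) (gamma0.1, 1) := by
  rw [QuotientGroup.mk'_apply, QuotientGroup.mk'_apply, QuotientGroup.eq]
  have : ((1 : TT), negOne)⁻¹ * (gamma0.1, 1) = gamma0 :=
    Prod.ext (by simp [gamma0]) (by simp [gamma0, SU2.negOne_inv])
  rw [this]
  exact mem_zpowers gamma0

theorem mk'_one_negOne_mem_connectedComponent
    (h : QuotientGroup.mk' (zpowers gamma0) (1, negOne) ∈ center Gquot) :
    (⟨_, h⟩ : center Gquot) ∈ connectedComponent 1 := by
  let f : TT → center Gquot := fun t =>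
    ⟨QuotientGroup.mk' _ (t, 1),
      center_Gquot_eq ▸ mem_map_of_mem _ ⟨mem_top t, one_mem _⟩⟩
  have hf : Continuous f := (QuotientGroup.continuous_mk.comp
    (continuous_id.prodMk continuous_const)).subtype_mk _
  have h1 : f 1 = 1 := Subtype.ext (map_one _)
  have hhalf : f gamma0.1 = ⟨_, h⟩ := Subtype.ext mk'_one_negOne_eq.symm
  rw [← h1, ← hhalf]
  exact hf.apply_mem_connectedComponent _ _

/-- In `G = (T × SU₂)/Γ` with `Γ = {(0,1), (1/2,−1)}`: the center of `G` is the image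
of `T × {1,−1}`, the commutator subgroup of `G` is the image of `{0,1/2} × SU₂`, and
the class of `(0,−1)` is a nontrivial element of the intersection of the identity
component of the center with the commutator subgroup. -/
theorem stmt_14 :
    Subgroup.center Gquot =
      Subgroup.map (QuotientGroup.mk' (Subgroup.zpowers gamma0))
        ((⊤ : Subgroup TT).prod (Subgroup.zpowers negOne)) ∧
    commutator Gquot =
      Subgroup.map (QuotientGroup.mk' (Subgroup.zpowers gamma0))
        ((Subgroup.zpowers
          (Multiplicative.ofAdd ((1 / 2 : ℝ) : AddCircle (1 : ℝ)))).prod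
            (⊤ : Subgroup SU2)) ∧
    QuotientGroup.mk' (Subgroup.zpowers gamma0) (1, negOne) ≠ 1 ∧
    QuotientGroup.mk' (Subgroup.zpowers gamma0) (1, negOne) ∈ commutator Gquot ∧
    ∃ h : QuotientGroup.mk' (Subgroup.zpowers gamma0) (1, negOne) ∈
        Subgroup.center Gquot,
      (⟨QuotientGroup.mk' (Subgroup.zpowers gamma0) (1, negOne), h⟩ :
          Subgroup.center Gquot) ∈
        connectedComponent (1 : Subgroup.center Gquot) := by
  have hcen : QuotientGroup.mk' (zpowers gamma0) (1, negOne) ∈ center Gquot :=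
    center_Gquot_eq ▸ mem_map_of_mem _ ⟨mem_top _, mem_zpowers _⟩
  have hcomm : QuotientGroup.mk' (zpowers gamma0) (1, negOne) ∈ commutator Gquot :=
    commutator_Gquot_eq ▸ mem_map_of_mem _ ⟨one_mem _, mem_top _⟩
  exact ⟨center_Gquot_eq, commutator_Gquot_eq.trans map_mk'_bot_prod_top, mk'_one_negOne_ne_one,
    hcomm, hcen, mk'_one_negOne_mem_connectedComponent hcen⟩
end
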